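/- Suppose the delay system ẋ(t) = f(x_t) is forward complete on C⁰. Then the following are equivalent: (a) the system satisfies Lyapunov stability (for every ε > 0 there exists δ > 0 such that ‖φ(t,x₀)‖_∞ ≤ ε for all t ≥ 0 and all x₀ ∈ C⁰ with ‖x₀‖_∞ ≤ δ), global attractivity (for every x₀ ∈ C⁰, ‖φ(t,x₀)‖_∞ → 0 as t → ∞), and robust forward completeness (for every ρ, T > 0 one has sup{‖φ(t,x₀)‖_∞ : t ∈ [0,T], x₀ ∈ C⁰, ‖x₀‖_∞ ≤ ρ} < ∞); (b) the system is uniformly globally asymptotically stable: there exists a class-KL function σ such that ‖φ(t,x₀)‖_∞ ≤ σ(‖x₀‖_∞, t) for all t ≥ 0 and all x₀ ∈ C⁰. -/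

import Mathlib

open Set MeasureTheory Filter Topology
open scoped ENNReal NNReal

noncomputable section

abbrev Vec (n : ℕ) := EuclideanSpace ℝ (Fin n)

variable {n : ℕ}

/-- The segment `x_t` of a history `x : ℝ → ℝⁿ`, i.e. `x_t(s) = x(t+s)`
(only its values on `[-r,0]` are relevant). -/
def seg (r : ℝ) (x : ℝ → Vec n) (t : ℝ) : ℝ → Vec n := fun s => x (t + s)

/-- Sup norm over `[-r,0]`. -/
def supN (r : ℝ) (g : ℝ → Vec n) : ℝ := sSup ((fun s => ‖g s‖) '' Icc (-r) 0)

/-- Membership in `C⁰ = C([-r,0];ℝⁿ)`. -/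
def MemC0 (r : ℝ) (g : ℝ → Vec n) : Prop := ContinuousOn g (Icc (-r) 0)

/-- `f` vanishes at `0`, depends only on the values of its argument on `[-r,0]`,
and is Lipschitz on bounded subsets of `C⁰` with a nondecreasing (nonnegative)
modulus `L`. -/
def GoodRHS (r : ℝ) (f : (ℝ → Vec n) → Vec n) (L : ℝ → ℝ) : Prop :=
  f 0 = 0 ∧
  (∀ x y : ℝ → Vec n, EqOn x y (Icc (-r) 0) → f x = f y) ∧
  Monotone L ∧ (∀ s : ℝ, 0 ≤ L s) ∧
  ∀ R : ℝ, ∀ x y : ℝ → Vec n, MemC0 r x → MemC0 r y → supN r x ≤ R → supN r y ≤ R →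
    ‖f x - f y‖ ≤ L R * supN r (x - y)

/-- `x : ℝ → ℝⁿ` is a solution on `[-r, b)` (with `b ∈ (0,∞]` an extended
nonnegative real) of the delay system `ẋ(t) = f(x_t)` with initial condition `x0`:
it is continuous on `[-r,b)`, coincides with `x0` on `[-r,0]`, and satisfies the
integral equation `x(t) = x(0) + ∫₀ᵗ f(x_s) ds` on `[0,b)`. -/
def IsSol (r : ℝ) (f : (ℝ → Vec n) → Vec n) (x0 x : ℝ → Vec n) (b : ℝ≥0∞) : Prop :=
  ContinuousOn x {t : ℝ | -r ≤ t ∧ ENNReal.ofReal t < b} ∧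
  EqOn x x0 (Icc (-r) 0) ∧
  ∀ t : ℝ, 0 ≤ t → ENNReal.ofReal t < b → x t = x 0 + ∫ s in (0:ℝ)..t, f (seg r x s)

/-- Class `KL` functions `σ : [0,∞)×[0,∞) → [0,∞)`. -/
def ClassKL (σ : ℝ → ℝ → ℝ) : Prop :=
  (∀ s t : ℝ, 0 ≤ s → 0 ≤ t → 0 ≤ σ s t) ∧
  (∀ t : ℝ, 0 ≤ t →
    ContinuousOn (fun s => σ s t) (Ici 0) ∧ StrictMonoOn (fun s => σ s t) (Ici 0) ∧
      σ 0 t = 0) ∧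
  (∀ s : ℝ, 0 ≤ s →
    AntitoneOn (fun t => σ s t) (Ici 0) ∧ Tendsto (fun t => σ s t) atTop (nhds 0))

/-- Class `K∞` functions `a : [0,∞) → [0,∞)`. -/
def ClassKInf (a : ℝ → ℝ) : Prop :=
  (∀ s : ℝ, 0 ≤ s → 0 ≤ a s) ∧ ContinuousOn a (Ici 0) ∧ StrictMonoOn a (Ici 0) ∧
  a 0 = 0 ∧ Tendsto a atTop atTop

/-- The set of Hölder difference quotients `‖g t - g s‖ / |t-s|^α` over a set `S`. -/
def hRatios (α : ℝ) (S : Set ℝ) (g : ℝ → Vec n) : Set ℝ :=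
  {c | ∃ t ∈ S, ∃ s ∈ S, t ≠ s ∧ c = ‖g t - g s‖ / |t - s| ^ α}

/-- Membership in the Hölder space `C^{0,α}([-r,0])`. -/
def MemHol (r α : ℝ) (g : ℝ → Vec n) : Prop :=
  MemC0 r g ∧ BddAbove (hRatios α (Icc (-r) 0) g)

/-- The Hölder norm `max(‖g‖_∞, [g]_α)`. -/
def holderNorm (r α : ℝ) (g : ℝ → Vec n) : ℝ :=
  max (supN r g) (sSup (hRatios α (Icc (-r) 0) g))

/-- Membership in the Sobolev space `W^{1,p}([-r,0])`: `g` is absolutely continuous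
on `[-r,0]` (i.e. the integral of an integrable function `d`, which is then its a.e.
derivative) with `d ∈ L^p((-r,0))`. -/
def MemW (r : ℝ) (p : ℝ≥0∞) (g : ℝ → Vec n) : Prop :=
  ∃ d : ℝ → Vec n, IntegrableOn d (Icc (-r) 0) ∧
    eLpNorm d p (volume.restrict (Ioo (-r) 0)) < ⊤ ∧
    ∀ t ∈ Icc (-r) 0, g t = g (-r) + ∫ s in (-r)..t, d s

/-- The Sobolev norm `‖g‖_∞ + ‖ġ‖_p`; for an absolutely continuous `g` the a.e.
derivative coincides a.e. on `(-r,0)` with `deriv g`. -/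
def sobNorm (r : ℝ) (p : ℝ≥0∞) (g : ℝ → Vec n) : ℝ :=
  supN r g + (eLpNorm (deriv g) p (volume.restrict (Ioo (-r) 0))).toReal

/-- The Hölder exponent `1 - 1/p`, with the convention `1/∞ = 0`. -/
def hexp (p : ℝ≥0∞) : ℝ := 1 - (p.toReal)⁻¹

/-!
(b) ⇒ (a) follows from the monotonicity of a class `KL` function in each variable.

For (a) ⇒ (b), global attractivity is first made uniform on bounded sets of initial conditions.
By robust forward completeness the segments `x_r` of the solutions starting in a ball are uniformly
bounded and uniformly Lipschitz, hence relatively compact in `C⁰` (Arzelà–Ascoli). Near any single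
initial condition attraction is uniform: its solution enters the ball of Lyapunov stability, and
nearby solutions follow it up to that time by Grönwall's inequality. Compactness makes the
attraction time uniform. Then `β(s, t) = sup {‖x_τ‖ : ‖x_0‖ ≤ s, τ ≥ t}` is finite, monotone in
both variables and tends to `0` as `t → ∞` and as `s → 0`, and
`σ(s, t) = ∫_1^2 β(s u, t) du + s e^{-t}` is a class `KL` function above it.
-/

open scoped BoundedContinuousFunction

theorem le_mul_exp_of_le_add_integral {m : ℝ → ℝ} {a K T : ℝ} (hK : 0 ≤ K)
    (hm : ContinuousOn m (Icc 0 T)) (h : ∀ t ∈ Icc 0 T, m t ≤ a + K * ∫ s in (0:ℝ)..t, m s) :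
    ∀ t ∈ Icc 0 T, m t ≤ a * Real.exp (K * t) := by
  set v : ℝ → ℝ := fun t => a + K * ∫ s in (0:ℝ)..t, m s
  have hint : ∀ t ∈ Icc 0 T, IntervalIntegrable m volume 0 t := fun t ht =>
    (hm.mono (Icc_subset_Icc_right ht.2)).intervalIntegrable_of_Icc ht.1
  have hvc : ContinuousOn v (Icc 0 T) := fun t ht => by
    have hprim := intervalIntegral.continuousOn_primitive_interval'
      (hint T ⟨ht.1.trans ht.2, le_rfl⟩) left_mem_uIcc
    exact (continuousOn_const.add (continuousOn_const.mul (hprim.mono Icc_subset_uIcc))) t ht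
  have hv' : ∀ w ∈ Ico 0 T, HasDerivWithinAt v (K * m w) (Ici w) w := by
    intro w hw
    have hw' : w ∈ Icc 0 T := Ico_subset_Icc_self hw
    have : Fact (w ∈ Icc 0 T) := ⟨hw'⟩
    have hderiv := intervalIntegral.integral_hasDerivWithinAt_right (s := Icc 0 T) (hint w hw')
      (hm.stronglyMeasurableAtFilter_nhdsWithin measurableSet_Icc w) (hm w hw')
    exact ((hderiv.const_mul K).const_add a).mono_of_mem_nhdsWithin (Icc_mem_nhdsGE_of_mem hw)
  intro t ht
  have hgron := le_gronwallBound_of_liminf_deriv_right_le (δ := a) (ε := 0) hvc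
    (fun w hw _ hr => (hv' w hw).liminf_right_slope_le hr) (by simp [v])
    (fun w hw => by
      rw [add_zero]
      exact mul_le_mul_of_nonneg_left (h w (Ico_subset_Icc_self hw)) hK) t ht
  rw [sub_zero, gronwallBound_ε0] at hgron
  exact (h t ht).trans hgron

section KLMajorant

variable {β : ℝ → ℝ → ℝ}

/-- Averaging over `[s, 2s]` makes `β` continuous in `s`; the term `s e^{-t}` makes it strictly
increasing. -/
def klMajorant (β : ℝ → ℝ → ℝ) (s t : ℝ) : ℝ :=
  (∫ u in (1:ℝ)..2, β (s * u) t) + s * Real.exp (-t)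

lemma intervalIntegrable_comp_mul (hmono : ∀ t, Monotone fun s => β s t) {s : ℝ} (hs : 0 ≤ s)
    (t a b : ℝ) : IntervalIntegrable (fun u => β (s * u) t) volume a b :=
  ((hmono t).comp (monotone_mul_left_of_nonneg hs)).intervalIntegrable

lemma le_klMajorant (hmono : ∀ t, Monotone fun s => β s t) {s : ℝ} (hs : 0 ≤ s) (t : ℝ) :
    β s t ≤ klMajorant β s t := by
  have hint : β s t ≤ ∫ u in (1:ℝ)..2, β (s * u) t := by
    calc β s t = ∫ _ in (1:ℝ)..2, β s t := by norm_num
      _ ≤ _ := intervalIntegral.integral_mono_on (by norm_num) intervalIntegrable_const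
          (intervalIntegrable_comp_mul hmono hs t 1 2)
          fun u hu => hmono t (le_mul_of_one_le_right hs hu.1)
  have hdecay := mul_nonneg hs (Real.exp_pos (-t)).le
  unfold klMajorant
  linarith

lemma klMajorant_le (hmono : ∀ t, Monotone fun s => β s t) {s : ℝ} (hs : 0 ≤ s) (t : ℝ) :
    klMajorant β s t ≤ β (2 * s) t + s * Real.exp (-t) := by
  have hint : ∫ u in (1:ℝ)..2, β (s * u) t ≤ β (2 * s) t := by
    calc ∫ u in (1:ℝ)..2, β (s * u) t ≤ ∫ _ in (1:ℝ)..2, β (2 * s) t :=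
          intervalIntegral.integral_mono_on (by norm_num)
            (intervalIntegrable_comp_mul hmono hs t 1 2) intervalIntegrable_const
            fun u hu => hmono t (by rw [mul_comm 2 s]; exact mul_le_mul_of_nonneg_left hu.2 hs)
      _ = β (2 * s) t := by norm_num
  unfold klMajorant
  linarith

lemma klMajorant_zero (hnn : ∀ s t, 0 ≤ β s t) (hmono : ∀ t, Monotone fun s => β s t)
    (hanti : ∀ s, Antitone (β s)) (hsmall : ∀ ε, 0 < ε → ∃ δ, 0 < δ ∧ β δ 0 ≤ ε)
    {t : ℝ} (ht : 0 ≤ t) : klMajorant β 0 t = 0 := by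
  have hβ : β 0 t = 0 := by
    refine le_antisymm (le_of_forall_pos_le_add fun ε hε => ?_) (hnn 0 t)
    obtain ⟨δ, hδ, hδε⟩ := hsmall ε hε
    linarith [hanti 0 ht, hmono 0 hδ.le]
  simp [klMajorant, hβ]

/-- For `s > 0` the majorant is `s⁻¹ (H (2s) - H s) + s e^{-t}` with `H` a primitive of the
monotone, hence locally integrable, function `β(·, t)`. -/
lemma continuousOn_klMajorant (hnn : ∀ s t, 0 ≤ β s t) (hmono : ∀ t, Monotone fun s => β s t)
    (hanti : ∀ s, Antitone (β s)) (hsmall : ∀ ε, 0 < ε → ∃ δ, 0 < δ ∧ β δ 0 ≤ ε)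
    {t : ℝ} (ht : 0 ≤ t) : ContinuousOn (fun s => klMajorant β s t) (Ici 0) := by
  intro s₀ hs₀
  rcases (mem_Ici.1 hs₀).eq_or_lt with rfl | hpos
  · rw [Metric.continuousWithinAt_iff]
    intro ε hε
    obtain ⟨δ, hδ, hδε⟩ := hsmall (ε / 2) (half_pos hε)
    refine ⟨min (δ / 2) (ε / 2), by positivity, fun s hs hdist => ?_⟩
    rw [mem_Ici] at hs
    rw [Real.dist_eq, sub_zero, abs_of_nonneg hs, lt_min_iff] at hdist
    have hupper : klMajorant β s t ≤ β (2 * s) t + s * Real.exp (-t) := klMajorant_le hmono hs t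
    have hdecay : s * Real.exp (-t) ≤ s :=
      mul_le_of_le_one_right hs (Real.exp_le_one_iff.2 (neg_nonpos.2 ht))
    have hβ : β (2 * s) t ≤ β δ 0 := (hanti _ ht).trans (hmono 0 (by linarith))
    rw [Real.dist_eq, klMajorant_zero hnn hmono hanti hsmall ht, sub_zero,
      abs_of_nonneg ((hnn s t).trans (le_klMajorant hmono hs t))]
    linarith
  · set H : ℝ → ℝ := fun y => ∫ v in (0:ℝ)..y, β v t
    have hH : Continuous H := intervalIntegral.continuous_primitive
      (fun a b => (hmono t).intervalIntegrable) 0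
    have hform : ∀ s ∈ Ioi (0:ℝ),
        klMajorant β s t = s⁻¹ * (H (s * 2) - H (s * 1)) + s * Real.exp (-t) := by
      intro s hs
      rw [klMajorant, intervalIntegral.integral_comp_mul_left (fun v => β v t) (ne_of_gt hs),
        intervalIntegral.integral_interval_sub_left (hmono t).intervalIntegrable
          (hmono t).intervalIntegrable, smul_eq_mul]
    have hcont : ContinuousAt
        (fun s => s⁻¹ * (H (s * 2) - H (s * 1)) + s * Real.exp (-t)) s₀ := by
      have hs₀ := hpos.ne'
      fun_prop
    exact (hcont.congr (eventuallyEq_of_mem (Ioi_mem_nhds hpos) hform).symm).continuousWithinAt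

lemma strictMonoOn_klMajorant (hmono : ∀ t, Monotone fun s => β s t) (t : ℝ) :
    StrictMonoOn (fun s => klMajorant β s t) (Ici 0) := by
  intro a ha b hb hab
  have hint : ∫ u in (1:ℝ)..2, β (a * u) t ≤ ∫ u in (1:ℝ)..2, β (b * u) t :=
    intervalIntegral.integral_mono_on (by norm_num) (intervalIntegrable_comp_mul hmono ha t 1 2)
      (intervalIntegrable_comp_mul hmono hb t 1 2)
      fun u hu => hmono t (mul_le_mul_of_nonneg_right hab.le (by linarith [hu.1]))
  have hdecay := mul_lt_mul_of_pos_right hab (Real.exp_pos (-t))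
  simp only [klMajorant]
  linarith

lemma antitone_klMajorant (hmono : ∀ t, Monotone fun s => β s t) (hanti : ∀ s, Antitone (β s))
    {s : ℝ} (hs : 0 ≤ s) : Antitone (klMajorant β s) := by
  intro t₁ t₂ ht
  have hint : ∫ u in (1:ℝ)..2, β (s * u) t₂ ≤ ∫ u in (1:ℝ)..2, β (s * u) t₁ :=
    intervalIntegral.integral_mono_on (by norm_num) (intervalIntegrable_comp_mul hmono hs t₂ 1 2)
      (intervalIntegrable_comp_mul hmono hs t₁ 1 2) fun u _ => hanti _ ht
  have hdecay := mul_le_mul_of_nonneg_left (Real.exp_le_exp.2 (neg_le_neg ht)) hs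
  simp only [klMajorant]
  linarith

lemma tendsto_klMajorant (hnn : ∀ s t, 0 ≤ β s t) (hmono : ∀ t, Monotone fun s => β s t)
    (hlim : ∀ s, Tendsto (β s) atTop (𝓝 0)) {s : ℝ} (hs : 0 ≤ s) :
    Tendsto (klMajorant β s) atTop (𝓝 0) := by
  have hbound : Tendsto (fun t => β (2 * s) t + s * Real.exp (-t)) atTop (𝓝 0) := by
    simpa using (hlim (2 * s)).add (Real.tendsto_exp_neg_atTop_nhds_zero.const_mul s)
  exact squeeze_zero (fun t => (hnn s t).trans (le_klMajorant hmono hs t))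
    (fun t => klMajorant_le hmono hs t) hbound

theorem exists_classKL_ge (hnn : ∀ s t, 0 ≤ β s t) (hmono : ∀ t, Monotone fun s => β s t)
    (hanti : ∀ s, Antitone (β s)) (hlim : ∀ s, Tendsto (β s) atTop (𝓝 0))
    (hsmall : ∀ ε, 0 < ε → ∃ δ, 0 < δ ∧ β δ 0 ≤ ε) :
    ∃ σ, ClassKL σ ∧ ∀ s t, 0 ≤ s → β s t ≤ σ s t := by
  refine ⟨klMajorant β, ⟨fun s t hs _ => (hnn s t).trans (le_klMajorant hmono hs t),
    fun t ht => ⟨continuousOn_klMajorant hnn hmono hanti hsmall ht, strictMonoOn_klMajorant hmono t,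
      klMajorant_zero hnn hmono hanti hsmall ht⟩,
    fun s hs => ⟨(antitone_klMajorant hmono hanti hs).antitoneOn _,
      tendsto_klMajorant hnn hmono hlim hs⟩⟩, fun s t hs => le_klMajorant hmono hs t⟩

end KLMajorant

lemma IsCompact.eventually_forall_mem_of_eventually_prod {X Y : Type*} [TopologicalSpace Y]
    {l : Filter X} {K : Set Y} (hK : IsCompact K) {P : X → Y → Prop}
    (hP : ∀ y ∈ K, ∀ᶠ p in l ×ˢ 𝓝 y, P p.1 p.2) : ∀ᶠ x in l, ∀ y ∈ K, P x y :=
  Eventually.curry (la := l) (lb := 𝓝ˢ K) (hK.mem_prod_nhdsSet_of_forall hP)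
    |>.mono fun _ h => h.self_of_nhdsSet

lemma isCompact_closure_of_norm_le_of_lipschitzWith {α E : Type*} [PseudoMetricSpace α]
    [CompactSpace α] [NormedAddCommGroup E] [ProperSpace E] {A : Set (α →ᵇ E)} {M : ℝ} {K : ℝ≥0}
    (hM : ∀ G ∈ A, ∀ u, ‖G u‖ ≤ M) (hK : ∀ G ∈ A, LipschitzWith K G) : IsCompact (closure A) :=
  BoundedContinuousFunction.arzela_ascoli _ (isCompact_closedBall 0 M) A
    (fun G u hG => mem_closedBall_zero_iff.2 (hM G hG u))
    (LipschitzWith.uniformEquicontinuous (fun G : A => ((G : α →ᵇ E) : α → E)) K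
      fun G => hK G G.2).equicontinuous

section SupNorm

variable {r : ℝ}

lemma supN_le (hr : 0 < r) {g : ℝ → Vec n} {M : ℝ} (h : ∀ s ∈ Icc (-r) 0, ‖g s‖ ≤ M) :
    supN r g ≤ M :=
  csSup_le (nonempty_Icc.2 (neg_nonpos.2 hr.le) |>.image _) (forall_mem_image.2 h)

lemma norm_le_supN {g : ℝ → Vec n} (hg : MemC0 r g) {s : ℝ} (hs : s ∈ Icc (-r) 0) :
    ‖g s‖ ≤ supN r g :=
  le_csSup (isCompact_Icc.image_of_continuousOn hg.norm).bddAbove (mem_image_of_mem _ hs)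

lemma supN_nonneg (hr : 0 < r) {g : ℝ → Vec n} (hg : MemC0 r g) : 0 ≤ supN r g :=
  (norm_nonneg _).trans (norm_le_supN hg ⟨neg_nonpos.2 hr.le, le_rfl⟩)

lemma supN_add_le (hr : 0 < r) {g h : ℝ → Vec n} (hg : MemC0 r g) (hh : MemC0 r h) :
    supN r (g + h) ≤ supN r g + supN r h :=
  supN_le hr fun _ hs =>
    (norm_add_le _ _).trans (add_le_add (norm_le_supN hg hs) (norm_le_supN hh hs))

lemma supN_congr {g h : ℝ → Vec n} (hgh : EqOn g h (Icc (-r) 0)) : supN r g = supN r h := by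
  unfold supN
  rw [image_congr fun s hs => congrArg norm (hgh hs)]

lemma supN_zero : supN r (0 : ℝ → Vec n) = 0 := by
  rcases (Icc (-r) (0:ℝ)).eq_empty_or_nonempty with h | h
  · simp [supN, h]
  · simp [supN, h.image_const]

lemma continuous_supN {F : ℝ → ℝ → Vec n} (hF : Continuous (Function.uncurry F)) :
    Continuous fun t => supN r (F t) :=
  isCompact_Icc.continuous_sSup (f := fun t s => ‖F t s‖) hF.norm

@[simp] lemma seg_zero (x : ℝ → Vec n) : seg r x 0 = x := by
  ext1 s; simp [seg]

lemma seg_comp_add_right (x : ℝ → Vec n) (τ t : ℝ) :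
    seg r (fun s => x (s + τ)) t = seg r x (t + τ) := by
  ext1 u; simp only [seg]; ring_nf

lemma memC0_seg {x : ℝ → Vec n} (hx : ContinuousOn x (Ici (-r))) {t : ℝ} (ht : 0 ≤ t) :
    MemC0 r (seg r x t) :=
  hx.comp (continuous_const.add continuous_id).continuousOn
    fun s hs => by simp only [mem_Ici]; linarith [hs.1]

lemma norm_le_supN_seg {x : ℝ → Vec n} (hx : ContinuousOn x (Ici (-r))) {t u : ℝ} (ht : 0 ≤ t)
    (hu : u ∈ Icc (t - r) t) : ‖x u‖ ≤ supN r (seg r x t) := by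
  simpa [seg] using norm_le_supN (memC0_seg hx ht) (s := u - t)
    ⟨by linarith [hu.1], by linarith [hu.2]⟩

def extendLeft (r : ℝ) (x : ℝ → Vec n) : ℝ → Vec n := fun u => x (max u (-r))

lemma continuous_extendLeft {x : ℝ → Vec n} (hx : ContinuousOn x (Ici (-r))) :
    Continuous (extendLeft r x) :=
  hx.comp_continuous (continuous_id.max continuous_const) fun u => le_max_right u (-r)

lemma seg_extendLeft (x : ℝ → Vec n) {t : ℝ} (ht : 0 ≤ t) :
    EqOn (seg r (extendLeft r x) t) (seg r x t) (Icc (-r) 0) := fun s hs => by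
  simp only [seg, extendLeft]
  rw [max_eq_left (by linarith [hs.1])]

lemma continuousOn_supN_seg {x : ℝ → Vec n} (hx : ContinuousOn x (Ici (-r))) :
    ContinuousOn (fun t => supN r (seg r x t)) (Ici 0) :=
  (continuous_supN (F := fun t s => extendLeft r x (t + s))
    (by have := continuous_extendLeft hx; fun_prop)).continuousOn.congr
    fun t ht => (supN_congr (seg_extendLeft x ht)).symm

end SupNorm

section Solutions

variable {r : ℝ} {f : (ℝ → Vec n) → Vec n} {L : ℝ → ℝ} {x0 x : ℝ → Vec n}

lemma IsSol.continuousOn (hx : IsSol r f x0 x ⊤) : ContinuousOn x (Ici (-r)) := by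
  simpa [Ici, ENNReal.ofReal_lt_top] using hx.1

lemma IsSol.eq_add_integral (hx : IsSol r f x0 x ⊤) {t : ℝ} (ht : 0 ≤ t) :
    x t = x 0 + ∫ s in (0:ℝ)..t, f (seg r x s) :=
  hx.2.2 t ht ENNReal.ofReal_lt_top

lemma IsSol.memC0_seg (hx : IsSol r f x0 x ⊤) {t : ℝ} (ht : 0 ≤ t) : MemC0 r (seg r x t) :=
  _root_.memC0_seg hx.continuousOn ht

lemma GoodRHS.modulus_nonneg (hf : GoodRHS r f L) (R : ℝ) : 0 ≤ L R := hf.2.2.2.1 R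

lemma GoodRHS.norm_sub_le (hf : GoodRHS r f L) {g h : ℝ → Vec n} (hg : MemC0 r g)
    (hh : MemC0 r h) {R : ℝ} (hgR : supN r g ≤ R) (hhR : supN r h ≤ R) :
    ‖f g - f h‖ ≤ L R * supN r (g - h) :=
  hf.2.2.2.2 R g h hg hh hgR hhR

lemma GoodRHS.norm_le (hr : 0 < r) (hf : GoodRHS r f L) {g : ℝ → Vec n} (hg : MemC0 r g)
    {M : ℝ} (hgM : supN r g ≤ M) : ‖f g‖ ≤ L M * M := by
  have hM : 0 ≤ M := (supN_nonneg hr hg).trans hgM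
  have h := hf.norm_sub_le (h := 0) hg continuousOn_const hgM (supN_zero.trans_le hM)
  rw [hf.1, sub_zero, sub_zero] at h
  exact h.trans (mul_le_mul_of_nonneg_left hgM (hf.modulus_nonneg M))

lemma GoodRHS.continuousOn_comp_seg (hf : GoodRHS r f L)
    (hx : IsSol r f x0 x ⊤) : ContinuousOn (fun s => f (seg r x s)) (Ici 0) := by
  intro s₀ hs₀
  set xe := extendLeft r x
  have hxe : Continuous xe := continuous_extendLeft hx.continuousOn
  set M := supN r (seg r x s₀) + 1
  have hbdd : ∀ᶠ s in 𝓝[Ici 0] s₀, supN r (seg r x s) ≤ M :=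
    (continuousOn_supN_seg hx.continuousOn s₀ hs₀).eventually (Iic_mem_nhds (lt_add_one _))
  have hdist : Tendsto (fun s => supN r (seg r xe s - seg r xe s₀)) (𝓝[Ici 0] s₀) (𝓝 0) := by
    have hcont := continuous_supN (r := r) (F := fun s u => xe (s + u) - xe (s₀ + u))
      (by fun_prop)
    have := (hcont.tendsto s₀).mono_left (nhdsWithin_le_nhds (s := Ici 0))
    have h0 : supN r (fun _ : ℝ => (0 : Vec n)) = 0 := supN_zero
    simp only [sub_self, h0] at this
    exact this
  rw [ContinuousWithinAt, tendsto_iff_norm_sub_tendsto_zero]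
  refine squeeze_zero' (Eventually.of_forall fun _ => norm_nonneg _) ?_
    (by simpa using hdist.const_mul (L M))
  filter_upwards [hbdd, self_mem_nhdsWithin] with s hsM hs
  have hlip := hf.norm_sub_le (hx.memC0_seg hs) (hx.memC0_seg hs₀) hsM (by linarith)
  rwa [supN_congr fun u hu => by
    simp only [Pi.sub_apply]
    rw [← seg_extendLeft x hs hu, ← seg_extendLeft x hs₀ hu]] at hlip

lemma GoodRHS.intervalIntegrable_comp_seg (hf : GoodRHS r f L) (hx : IsSol r f x0 x ⊤)
    {a b : ℝ} (ha : 0 ≤ a) (hb : 0 ≤ b) :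
    IntervalIntegrable (fun s => f (seg r x s)) volume a b :=
  (hf.continuousOn_comp_seg hx).mono (fun _ hs => (le_min ha hb).trans hs.1)
    |>.intervalIntegrable

lemma GoodRHS.integral_comp_seg (hf : GoodRHS r f L) (hx : IsSol r f x0 x ⊤)
    {a b : ℝ} (ha : 0 ≤ a) (hb : 0 ≤ b) : ∫ s in a..b, f (seg r x s) = x b - x a := by
  rw [← intervalIntegral.integral_interval_sub_left (hf.intervalIntegrable_comp_seg hx le_rfl hb)
    (hf.intervalIntegrable_comp_seg hx le_rfl ha), hx.eq_add_integral ha,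
    hx.eq_add_integral hb]
  abel

lemma IsSol.shift (hf : GoodRHS r f L) (hx : IsSol r f x0 x ⊤) {τ : ℝ} (hτ : 0 ≤ τ) :
    IsSol r f (seg r x τ) (fun t => x (t + τ)) ⊤ := by
  refine ⟨?_, fun t _ => by simp only [seg, add_comm], fun t ht _ => ?_⟩
  · have h : ContinuousOn (fun t => x (t + τ)) (Ici (-r)) :=
      hx.continuousOn.comp (continuous_id.add continuous_const).continuousOn
        fun t (ht : -r ≤ t) => show -r ≤ t + τ by linarith
    simpa [Ici, ENNReal.ofReal_lt_top] using h
  · simp only [seg_comp_add_right]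
    rw [intervalIntegral.integral_comp_add_right (fun s => f (seg r x s)),
      hf.integral_comp_seg hx (by linarith) (by linarith)]
    simp only [zero_add, add_comm t τ]
    abel

lemma GoodRHS.norm_sub_le_of_supN_seg_le (hr : 0 < r) (hf : GoodRHS r f L)
    (hx : IsSol r f x0 x ⊤) {a b M : ℝ} (ha : 0 ≤ a) (hab : a ≤ b)
    (hM : ∀ s ∈ Icc a b, supN r (seg r x s) ≤ M) : ‖x b - x a‖ ≤ L M * M * (b - a) := by
  rw [← hf.integral_comp_seg hx ha (ha.trans hab), ← abs_of_nonneg (sub_nonneg.2 hab)]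
  refine intervalIntegral.norm_integral_le_of_norm_le_const fun s hs => ?_
  rw [uIoc_of_le hab] at hs
  exact hf.norm_le hr (hx.memC0_seg (by linarith [hs.1])) (hM s (Ioc_subset_Icc_self hs))

end Solutions

section ContinuousDependence

variable {r : ℝ} {f : (ℝ → Vec n) → Vec n} {L : ℝ → ℝ} {x0 x y0 y : ℝ → Vec n}

lemma GoodRHS.norm_sub_le_add_integral (hf : GoodRHS r f L) (hx : IsSol r f x0 x ⊤)
    (hy : IsSol r f y0 y ⊤) {T M : ℝ} (hxM : ∀ t ∈ Icc 0 T, supN r (seg r x t) ≤ M)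
    (hyM : ∀ t ∈ Icc 0 T, supN r (seg r y t) ≤ M) {u : ℝ} (hu : u ∈ Icc 0 T) :
    ‖x u - y u‖ ≤ ‖x 0 - y 0‖ + L M * ∫ s in (0:ℝ)..u, supN r (seg r (x - y) s) := by
  have hint : ∀ {g : ℝ → Vec n} {g0}, IsSol r f g0 g ⊤ →
      IntervalIntegrable (fun s => f (seg r g s)) volume 0 u :=
    fun hg => hf.intervalIntegrable_comp_seg hg le_rfl hu.1
  have hdiff : x u - y u = (x 0 - y 0) + ∫ s in (0:ℝ)..u, (f (seg r x s) - f (seg r y s)) := by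
    rw [intervalIntegral.integral_sub (hint hx) (hint hy), hx.eq_add_integral hu.1,
      hy.eq_add_integral hu.1]
    abel
  have hlip : ∀ s ∈ Icc 0 u, ‖f (seg r x s) - f (seg r y s)‖ ≤ L M * supN r (seg r (x - y) s) :=
    fun s hs => hf.norm_sub_le (hx.memC0_seg hs.1) (hy.memC0_seg hs.1)
      (hxM s ⟨hs.1, hs.2.trans hu.2⟩) (hyM s ⟨hs.1, hs.2.trans hu.2⟩)
  have hw : ContinuousOn (fun s => supN r (seg r (x - y) s)) (Ici 0) :=
    continuousOn_supN_seg (hx.continuousOn.sub hy.continuousOn)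
  rw [hdiff, ← intervalIntegral.integral_const_mul]
  refine (norm_add_le _ _).trans (add_le_add_right ?_ _)
  refine (intervalIntegral.norm_integral_le_integral_norm hu.1).trans
    (intervalIntegral.integral_mono_on hu.1 ((hint hx).sub (hint hy)).norm ?_ hlip)
  exact ((hw.mono fun s hs => hs.1).const_mul _ |>.intervalIntegrable_of_Icc hu.1)

/-- Since `‖(x - y)_t‖` dominates `‖x 0 - y 0‖`, the pointwise estimate above becomes an integral
inequality for `t ↦ ‖(x - y)_t‖` itself, to which Grönwall applies. -/
lemma GoodRHS.supN_seg_sub_le (hr : 0 < r) (hf : GoodRHS r f L) (hx : IsSol r f x0 x ⊤)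
    (hy : IsSol r f y0 y ⊤) {T M : ℝ} (hxM : ∀ t ∈ Icc 0 T, supN r (seg r x t) ≤ M)
    (hyM : ∀ t ∈ Icc 0 T, supN r (seg r y t) ≤ M) :
    ∀ t ∈ Icc 0 T, supN r (seg r (x - y) t) ≤ supN r (x - y) * Real.exp (L M * t) := by
  have hxy : ContinuousOn (x - y) (Ici (-r)) := hx.continuousOn.sub hy.continuousOn
  have hw0 : ∀ t, 0 ≤ t → 0 ≤ supN r (seg r (x - y) t) :=
    fun t ht => supN_nonneg hr (memC0_seg hxy ht)
  suffices key : ∀ t ∈ Icc 0 T, supN r (seg r (x - y) t)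
      ≤ supN r (seg r (x - y) 0) + L M * ∫ s in (0:ℝ)..t, supN r (seg r (x - y) s) by
    simpa only [seg_zero] using le_mul_exp_of_le_add_integral (hf.modulus_nonneg M)
      ((continuousOn_supN_seg hxy).mono fun t ht => ht.1) key
  have hx0 : ‖x 0 - y 0‖ ≤ supN r (seg r (x - y) 0) :=
    norm_le_supN_seg hxy le_rfl ⟨by linarith, le_rfl⟩
  refine fun t ht => supN_le hr fun θ hθ => ?_
  have hint : 0 ≤ L M * ∫ s in (0:ℝ)..t, supN r (seg r (x - y) s) :=
    mul_nonneg (hf.modulus_nonneg M) (intervalIntegral.integral_nonneg ht.1 fun s hs => hw0 s hs.1)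
  rcases le_or_gt (t + θ) 0 with hneg | hpos
  · have := norm_le_supN_seg hxy le_rfl (u := t + θ) ⟨by linarith [hθ.1, ht.1], hneg⟩
    exact this.trans (le_add_of_nonneg_right hint)
  · have hu : t + θ ∈ Icc 0 T := ⟨hpos.le, by linarith [hθ.2, ht.2]⟩
    have hmono : ∫ s in (0:ℝ)..t + θ, supN r (seg r (x - y) s)
        ≤ ∫ s in (0:ℝ)..t, supN r (seg r (x - y) s) := by
      refine intervalIntegral.integral_mono_interval le_rfl hpos.le (by linarith [hθ.2]) ?_
        (((continuousOn_supN_seg hxy).mono fun s hs => hs.1).intervalIntegrable_of_Icc ht.1)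
      filter_upwards [ae_restrict_mem measurableSet_Ioc] with s hs using hw0 s hs.1.le
    calc ‖(x - y) (t + θ)‖ ≤ ‖x 0 - y 0‖ + L M * ∫ s in (0:ℝ)..t + θ, supN r (seg r (x - y) s) :=
          hf.norm_sub_le_add_integral hx hy hxM hyM hu
      _ ≤ supN r (seg r (x - y) 0) + L M * ∫ s in (0:ℝ)..t, supN r (seg r (x - y) s) := by
          gcongr
          exact hf.modulus_nonneg M

end ContinuousDependence

section Stability

def LyapunovStable (r : ℝ) (f : (ℝ → Vec n) → Vec n) : Prop :=
  ∀ ε : ℝ, 0 < ε → ∃ δ : ℝ, 0 < δ ∧ ∀ x0 x : ℝ → Vec n, MemC0 r x0 →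
    IsSol r f x0 x ⊤ → supN r x0 ≤ δ → ∀ t : ℝ, 0 ≤ t → supN r (seg r x t) ≤ ε

def GloballyAttractive (r : ℝ) (f : (ℝ → Vec n) → Vec n) : Prop :=
  ∀ x0 x : ℝ → Vec n, MemC0 r x0 → IsSol r f x0 x ⊤ →
    Tendsto (fun t => supN r (seg r x t)) atTop (𝓝 0)

def RobustlyForwardComplete (r : ℝ) (f : (ℝ → Vec n) → Vec n) : Prop :=
  ∀ ρ T : ℝ, 0 < ρ → 0 < T → ∃ M : ℝ, ∀ x0 x : ℝ → Vec n, MemC0 r x0 →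
    IsSol r f x0 x ⊤ → supN r x0 ≤ ρ → ∀ t ∈ Icc (0:ℝ) T, supN r (seg r x t) ≤ M

def KLBound (r : ℝ) (f : (ℝ → Vec n) → Vec n) (σ : ℝ → ℝ → ℝ) : Prop :=
  ∀ x0 x : ℝ → Vec n, MemC0 r x0 → IsSol r f x0 x ⊤ → ∀ t : ℝ, 0 ≤ t →
    supN r (seg r x t) ≤ σ (supN r x0) t

def UniformlyAttractive (r : ℝ) (f : (ℝ → Vec n) → Vec n) : Prop :=
  ∀ ρ ε : ℝ, 0 < ε → ∃ T : ℝ, ∀ x0 x : ℝ → Vec n, MemC0 r x0 →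
    IsSol r f x0 x ⊤ → supN r x0 ≤ ρ → ∀ t : ℝ, T ≤ t → supN r (seg r x t) ≤ ε

end Stability

section UniformAttractivity

variable {r : ℝ} {f : (ℝ → Vec n) → Vec n} {L : ℝ → ℝ} {x0 x : ℝ → Vec n}

/-- Near the initial condition of a single solution `z`, attraction is uniform: `z` enters the
`δ/2`-ball of Lyapunov stability at some time `T`, nearby solutions stay `δ/2`-close to it up to
time `T` by continuous dependence, and then remain `ε`-small. -/
lemma exists_uniform_attraction_near (hr : 0 < r) (hf : GoodRHS r f L)
    (hLS : LyapunovStable r f) (hGA : GloballyAttractive r f) (hRFC : RobustlyForwardComplete r f)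
    {z0 z : ℝ → Vec n} (hz0 : MemC0 r z0) (hz : IsSol r f z0 z ⊤) {ε : ℝ} (hε : 0 < ε) :
    ∃ T η : ℝ, 0 < η ∧ ∀ y0 y : ℝ → Vec n, MemC0 r y0 → IsSol r f y0 y ⊤ →
      supN r (y0 - z0) < η → ∀ t, T ≤ t → supN r (seg r y t) ≤ ε := by
  obtain ⟨δ, hδ, hstable⟩ := hLS ε hε
  obtain ⟨T₀, hT₀⟩ := (Metric.tendsto_atTop.1 (hGA z0 z hz0 hz)) (δ / 2) (half_pos hδ)
  set T := max T₀ 0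
  have hT : 0 ≤ T := le_max_right _ _
  obtain ⟨M, hM⟩ := hRFC (supN r z0 + 1) (T + 1) (by linarith [supN_nonneg hr hz0]) (by linarith)
  set η := min 1 (δ / 2 * Real.exp (-(L M * T)))
  refine ⟨T, η, lt_min one_pos (by positivity), fun y0 y hy0 hy hclose t ht => ?_⟩
  have hyz0 : MemC0 r (y0 - z0) := hy0.sub hz0
  have hy0z0 : supN r y0 ≤ supN r z0 + 1 := by
    have := supN_add_le hr hyz0 hz0
    rw [sub_add_cancel] at this
    linarith [min_le_left 1 (δ / 2 * Real.exp (-(L M * T)))]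
  have hbound : ∀ {w0 w}, MemC0 r w0 → IsSol r f w0 w ⊤ → supN r w0 ≤ supN r z0 + 1 →
      ∀ s ∈ Icc 0 T, supN r (seg r w s) ≤ M :=
    fun hw0 hw hw0M s hs => hM _ _ hw0 hw hw0M s ⟨hs.1, by linarith [hs.2]⟩
  have hdiff : supN r (seg r (y - z) T) ≤ δ / 2 := by
    have hcd := hf.supN_seg_sub_le hr hy hz (hbound hy0 hy hy0z0)
      (hbound hz0 hz (le_add_of_nonneg_right zero_le_one)) T ⟨hT, le_rfl⟩
    have hinit : supN r (y - z) = supN r (y0 - z0) :=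
      supN_congr fun s hs => by simp only [Pi.sub_apply]; rw [hy.2.1 hs, hz.2.1 hs]
    rw [hinit] at hcd
    calc supN r (seg r (y - z) T) ≤ supN r (y0 - z0) * Real.exp (L M * T) := hcd
      _ ≤ δ / 2 * Real.exp (-(L M * T)) * Real.exp (L M * T) := by
          gcongr
          exact hclose.le.trans (min_le_right _ _)
      _ = δ / 2 := by rw [mul_assoc, ← Real.exp_add, neg_add_cancel, Real.exp_zero, mul_one]
  have hzT : supN r (seg r z T) ≤ δ / 2 := by
    have := hT₀ T (le_max_left _ _)
    rw [Real.dist_eq, sub_zero, abs_lt] at this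
    exact this.2.le
  have hyT : supN r (seg r y T) ≤ δ := by
    have := supN_add_le hr (memC0_seg (hy.continuousOn.sub hz.continuousOn) hT)
      (hz.memC0_seg hT)
    rw [show seg r (y - z) T + seg r z T = seg r y T by ext1; simp [seg]] at this
    linarith
  have := hstable _ _ (hy.memC0_seg hT) (hy.shift hf hT) hyT (t - T) (by linarith)
  rwa [seg_comp_add_right, sub_add_cancel] at this

def reachableSegments (r : ℝ) (f : (ℝ → Vec n) → Vec n) (ρ : ℝ) :
    Set (Icc (-r) (0:ℝ) →ᵇ Vec n) :=
  {H | ∃ x0 x, MemC0 r x0 ∧ IsSol r f x0 x ⊤ ∧ supN r x0 ≤ ρ ∧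
    ∀ u : Icc (-r) (0:ℝ), H u = x (r + u)}

/-- Arzelà–Ascoli: on `[0, r]` the solutions starting in the `ρ`-ball are uniformly bounded by
robust forward completeness, hence uniformly Lipschitz since `f` is bounded on bounded sets. -/
lemma isCompact_closure_reachableSegments (hr : 0 < r) (hf : GoodRHS r f L)
    (hRFC : RobustlyForwardComplete r f) {ρ : ℝ} (hρ : 0 < ρ) :
    IsCompact (closure (reachableSegments r f ρ)) := by
  obtain ⟨M, hM⟩ := hRFC ρ r hρ hr
  have hmem : ∀ u : Icc (-r) (0:ℝ), r + (u : ℝ) ∈ Icc (0:ℝ) r :=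
    fun u => ⟨by linarith [u.2.1], by linarith [u.2.2]⟩
  refine isCompact_closure_of_norm_le_of_lipschitzWith (M := M) (K := (L M * M).toNNReal)
    (fun H ⟨x0, x, hx0, hx, hx0ρ, hH⟩ u => ?_) fun H ⟨x0, x, hx0, hx, hx0ρ, hH⟩ => ?_
  · rw [hH]
    exact (norm_le_supN_seg hx.continuousOn hr.le ⟨by linarith [u.2.1], by linarith [u.2.2]⟩).trans
      (hM x0 x hx0 hx hx0ρ r ⟨hr.le, le_rfl⟩)
  · have hlip : ∀ u v : Icc (-r) (0:ℝ), (u : ℝ) ≤ v →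
        dist (x (r + u)) (x (r + v)) ≤ L M * M * dist u v := by
      intro u v huv
      rw [dist_comm, dist_eq_norm, Subtype.dist_eq, Real.dist_eq, abs_sub_comm,
        abs_of_nonneg (sub_nonneg.2 huv)]
      convert hf.norm_sub_le_of_supN_seg_le hr hx (hmem u).1 (by linarith)
        fun s hs => hM x0 x hx0 hx hx0ρ s ⟨(hmem u).1.trans hs.1, hs.2.trans (hmem v).2⟩
        using 2
      ring
    refine LipschitzWith.of_dist_le' fun u v => ?_
    rw [hH, hH]
    rcases le_total (u : ℝ) v with huv | hvu
    · exact hlip u v huv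
    · rw [dist_comm, dist_comm u]
      exact hlip v u hvu

/-- Every solution from the `ρ`-ball has its segment at time `r` in the compact set
`closure (reachableSegments r f ρ)`, near each point of which attraction is uniform. -/
theorem uniformlyAttractive (hr : 0 < r) (hf : GoodRHS r f L)
    (hFC : ∀ x0 : ℝ → Vec n, MemC0 r x0 → ∃ x : ℝ → Vec n, IsSol r f x0 x ⊤)
    (hLS : LyapunovStable r f) (hGA : GloballyAttractive r f)
    (hRFC : RobustlyForwardComplete r f) : UniformlyAttractive r f := by
  intro ρ ε hε
  let P : ℝ → (Icc (-r) (0:ℝ) →ᵇ Vec n) → Prop := fun T H => ∀ y0 y : ℝ → Vec n, MemC0 r y0 →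
    IsSol r f y0 y ⊤ → (∀ u : Icc (-r) (0:ℝ), y0 u = H u) → ∀ t, T ≤ t → supN r (seg r y t) ≤ ε
  have hlocal : ∀ G, ∀ᶠ p in atTop ×ˢ 𝓝 G, P p.1 p.2 := by
    intro G
    let z0 : ℝ → Vec n := IccExtend (neg_nonpos.2 hr.le) G
    have hz0 : MemC0 r z0 := (G.continuous.comp continuous_projIcc).continuousOn
    obtain ⟨z, hz⟩ := hFC z0 hz0
    obtain ⟨T, η, hη, hnear⟩ := exists_uniform_attraction_near hr hf hLS hGA hRFC hz0 hz hε
    refine ((eventually_ge_atTop T).prod_mk (Metric.ball_mem_nhds G hη)).mono ?_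
    rintro ⟨T', H⟩ ⟨hT', hH⟩ y0 y hy0 hy hyH t ht
    refine hnear y0 y hy0 hy ((supN_le hr fun s hs => ?_).trans_lt hH) t (hT'.trans ht)
    rw [Pi.sub_apply, hyH ⟨s, hs⟩, show z0 s = G ⟨s, hs⟩ from IccExtend_of_mem _ _ hs,
      ← dist_eq_norm]
    exact BoundedContinuousFunction.dist_coe_le_dist _
  obtain ⟨T, hT⟩ := ((isCompact_closure_reachableSegments hr hf hRFC (ρ := max ρ 1)
    (by positivity)).eventually_forall_mem_of_eventually_prod fun G _ => hlocal G).exists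
  refine ⟨T + r, fun x0 x hx0 hx hx0ρ t ht => ?_⟩
  have hcont : Continuous fun u : Icc (-r) (0:ℝ) => x (r + u) :=
    hx.continuousOn.comp_continuous (continuous_const.add continuous_subtype_val)
      fun u => show -r ≤ r + u by linarith [u.2.1]
  have hA : BoundedContinuousFunction.mkOfCompact ⟨_, hcont⟩ ∈ reachableSegments r f (max ρ 1) :=
    ⟨x0, x, hx0, hx, hx0ρ.trans (le_max_left _ _), fun u => rfl⟩
  have := hT _ (subset_closure hA) _ _ (hx.memC0_seg hr.le) (hx.shift hf hr.le)
    (fun u => by simp [seg]) (t - r) (by linarith)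
  rwa [seg_comp_add_right, sub_add_cancel] at this

end UniformAttractivity

section KLEstimate

variable {r : ℝ} {f : (ℝ → Vec n) → Vec n}

/-- The `0` keeps the set nonempty. -/
def decaySet (r : ℝ) (f : (ℝ → Vec n) → Vec n) (s t : ℝ) : Set ℝ :=
  insert 0 {v | ∃ x0 x τ, MemC0 r x0 ∧ IsSol r f x0 x ⊤ ∧ supN r x0 ≤ s ∧ 0 ≤ τ ∧ t ≤ τ ∧
    v = supN r (seg r x τ)}

def decayBound (r : ℝ) (f : (ℝ → Vec n) → Vec n) (s t : ℝ) : ℝ := sSup (decaySet r f s t)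

lemma decaySet_mono {s s' t t' : ℝ} (hs : s ≤ s') (ht : t' ≤ t) :
    decaySet r f s t ⊆ decaySet r f s' t' :=
  insert_subset_insert fun _ ⟨x0, x, τ, hx0, hx, hx0s, hτ, htτ, hv⟩ =>
    ⟨x0, x, τ, hx0, hx, hx0s.trans hs, hτ, ht.trans htτ, hv⟩

lemma decayBound_le {s t c : ℝ} (hc : 0 ≤ c) (h : ∀ x0 x τ, MemC0 r x0 → IsSol r f x0 x ⊤ →
    supN r x0 ≤ s → 0 ≤ τ → t ≤ τ → supN r (seg r x τ) ≤ c) : decayBound r f s t ≤ c :=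
  csSup_le (insert_nonempty _ _) <| forall_mem_insert.2
    ⟨hc, fun _ ⟨x0, x, τ, hx0, hx, hx0s, hτ, htτ, hv⟩ => hv ▸ h x0 x τ hx0 hx hx0s hτ htτ⟩

lemma bddAbove_decaySet (hUA : UniformlyAttractive r f) (hRFC : RobustlyForwardComplete r f)
    (s t : ℝ) : BddAbove (decaySet r f s t) := by
  obtain ⟨T, hT⟩ := hUA s 1 one_pos
  obtain ⟨M, hM⟩ := hRFC (max s 1) (max T 1) (by positivity) (by positivity)
  refine ⟨max M 1, forall_mem_insert.2 ⟨by positivity, ?_⟩⟩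
  rintro _ ⟨x0, x, τ, hx0, hx, hx0s, hτ, -, rfl⟩
  rcases le_total τ (max T 1) with hτT | hTτ
  · exact (hM x0 x hx0 hx (hx0s.trans (le_max_left _ _)) τ ⟨hτ, hτT⟩).trans (le_max_left _ _)
  · exact (hT x0 x hx0 hx hx0s τ ((le_max_left _ _).trans hTτ)).trans (le_max_right _ _)

lemma decayBound_nonneg (hUA : UniformlyAttractive r f) (hRFC : RobustlyForwardComplete r f)
    (s t : ℝ) : 0 ≤ decayBound r f s t :=
  le_csSup (bddAbove_decaySet hUA hRFC s t) (mem_insert _ _)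

lemma decayBound_mono (hUA : UniformlyAttractive r f) (hRFC : RobustlyForwardComplete r f)
    {s s' t t' : ℝ} (hs : s ≤ s') (ht : t' ≤ t) : decayBound r f s t ≤ decayBound r f s' t' :=
  csSup_le_csSup (bddAbove_decaySet hUA hRFC s' t') (insert_nonempty _ _) (decaySet_mono hs ht)

lemma supN_seg_le_decayBound (hUA : UniformlyAttractive r f)
    (hRFC : RobustlyForwardComplete r f) {x0 x : ℝ → Vec n} (hx0 : MemC0 r x0)
    (hx : IsSol r f x0 x ⊤) {t : ℝ} (ht : 0 ≤ t) :
    supN r (seg r x t) ≤ decayBound r f (supN r x0) t :=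
  le_csSup (bddAbove_decaySet hUA hRFC _ t)
    (mem_insert_of_mem _ ⟨x0, x, t, hx0, hx, le_rfl, ht, le_rfl, rfl⟩)

lemma tendsto_decayBound (hUA : UniformlyAttractive r f) (hRFC : RobustlyForwardComplete r f)
    (s : ℝ) : Tendsto (decayBound r f s) atTop (𝓝 0) := by
  refine Metric.tendsto_atTop.2 fun ε hε => ?_
  obtain ⟨T, hT⟩ := hUA s (ε / 2) (half_pos hε)
  refine ⟨T, fun t ht => ?_⟩
  have hle : decayBound r f s t ≤ ε / 2 := decayBound_le (half_pos hε).le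
    fun x0 x τ hx0 hx hx0s _ htτ => hT x0 x hx0 hx hx0s τ (ht.trans htτ)
  rw [Real.dist_eq, sub_zero, abs_of_nonneg (decayBound_nonneg hUA hRFC s t)]
  linarith

theorem exists_classKL_of_uniformlyAttractive (hr : 0 < r) (hLS : LyapunovStable r f)
    (hUA : UniformlyAttractive r f) (hRFC : RobustlyForwardComplete r f) :
    ∃ σ, ClassKL σ ∧ KLBound r f σ := by
  have hsmall : ∀ ε, 0 < ε → ∃ δ, 0 < δ ∧ decayBound r f δ 0 ≤ ε := fun ε hε => by
    obtain ⟨δ, hδ, hstable⟩ := hLS ε hε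
    exact ⟨δ, hδ, decayBound_le hε.le fun x0 x τ hx0 hx hx0δ hτ _ => hstable x0 x hx0 hx hx0δ τ hτ⟩
  obtain ⟨σ, hσ, hle⟩ := exists_classKL_ge (decayBound_nonneg hUA hRFC)
    (fun t _ _ hs => decayBound_mono hUA hRFC hs le_rfl)
    (fun s _ _ ht => decayBound_mono hUA hRFC le_rfl ht) (tendsto_decayBound hUA hRFC) hsmall
  exact ⟨σ, hσ, fun x0 x hx0 hx t ht => (supN_seg_le_decayBound hUA hRFC hx0 hx ht).trans
    (hle _ _ (supN_nonneg hr hx0))⟩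

end KLEstimate

lemma ClassKL.le_apply_zero {σ : ℝ → ℝ → ℝ} (hσ : ClassKL σ) {s s' t : ℝ} (hs : 0 ≤ s)
    (hss' : s ≤ s') (ht : 0 ≤ t) : σ s t ≤ σ s' 0 :=
  ((hσ.2.2 s hs).1 self_mem_Ici ht ht).trans
    ((hσ.2.1 0 le_rfl).2.1.monotoneOn hs (hs.trans hss') hss')

section KLConsequences

variable {r : ℝ} {f : (ℝ → Vec n) → Vec n} {σ : ℝ → ℝ → ℝ}

lemma lyapunovStable_of_classKL (hr : 0 < r) (hσ : ClassKL σ)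
    (hB : KLBound r f σ) : LyapunovStable r f := by
  intro ε hε
  have hcont : Tendsto (fun s => σ s 0) (𝓝[≥] 0) (𝓝 (σ 0 0)) := (hσ.2.1 0 le_rfl).1 0 self_mem_Ici
  rw [(hσ.2.1 0 le_rfl).2.2] at hcont
  obtain ⟨δ, hδ, hδε⟩ := mem_nhdsGE_iff_exists_Icc_subset.1 (hcont (Iio_mem_nhds hε))
  refine ⟨δ, hδ, fun x0 x hx0 hx hx0δ t ht => (hB x0 x hx0 hx t ht).trans ?_⟩
  exact (hσ.le_apply_zero (supN_nonneg hr hx0) hx0δ ht).trans (hδε ⟨hδ.le, le_rfl⟩).le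

lemma globallyAttractive_of_classKL (hr : 0 < r) (hσ : ClassKL σ)
    (hB : KLBound r f σ) : GloballyAttractive r f := fun x0 x hx0 hx =>
  squeeze_zero' (eventually_ge_atTop 0 |>.mono fun _ ht => supN_nonneg hr (hx.memC0_seg ht))
    (eventually_ge_atTop 0 |>.mono fun t ht => hB x0 x hx0 hx t ht)
    (hσ.2.2 _ (supN_nonneg hr hx0)).2

lemma robustlyForwardComplete_of_classKL (hr : 0 < r) (hσ : ClassKL σ)
    (hB : KLBound r f σ) : RobustlyForwardComplete r f :=
  fun ρ _ _ _ => ⟨σ ρ 0, fun x0 x hx0 hx hx0ρ t ht => (hB x0 x hx0 hx t ht.1).trans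
    (hσ.le_apply_zero (supN_nonneg hr hx0) hx0ρ ht.1)⟩

end KLConsequences

theorem stmt0_general (n : ℕ) (r : ℝ) (hr : 0 < r)
    (f : (ℝ → Vec n) → Vec n) (L : ℝ → ℝ) (hf : GoodRHS r f L)
    (hFC : ∀ x0 : ℝ → Vec n, MemC0 r x0 → ∃ x : ℝ → Vec n, IsSol r f x0 x ⊤) :
    ((∀ ε : ℝ, 0 < ε → ∃ δ : ℝ, 0 < δ ∧ ∀ x0 x : ℝ → Vec n, MemC0 r x0 →
        IsSol r f x0 x ⊤ → supN r x0 ≤ δ → ∀ t : ℝ, 0 ≤ t → supN r (seg r x t) ≤ ε) ∧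
     (∀ x0 x : ℝ → Vec n, MemC0 r x0 → IsSol r f x0 x ⊤ →
        Tendsto (fun t => supN r (seg r x t)) atTop (nhds 0)) ∧
     (∀ ρ T : ℝ, 0 < ρ → 0 < T → ∃ M : ℝ, ∀ x0 x : ℝ → Vec n, MemC0 r x0 →
        IsSol r f x0 x ⊤ → supN r x0 ≤ ρ → ∀ t ∈ Icc (0:ℝ) T, supN r (seg r x t) ≤ M))
    ↔
    (∃ σ : ℝ → ℝ → ℝ, ClassKL σ ∧ ∀ x0 x : ℝ → Vec n, MemC0 r x0 →
        IsSol r f x0 x ⊤ → ∀ t : ℝ, 0 ≤ t → supN r (seg r x t) ≤ σ (supN r x0) t) := by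
  constructor
  · rintro ⟨hLS, hGA, hRFC⟩
    exact exists_classKL_of_uniformlyAttractive hr hLS
      (uniformlyAttractive hr hf hFC hLS hGA hRFC) hRFC
  · rintro ⟨σ, hσ, hB⟩
    exact ⟨lyapunovStable_of_classKL hr hσ hB, globallyAttractive_of_classKL hr hσ hB,
      robustlyForwardComplete_of_classKL hr hσ hB⟩

/-- For a forward-complete time-invariant delay system on `C⁰`,
(Lyapunov stability ∧ global attractivity ∧ robust forward completeness) ↔ UGAS. -/
theorem stmt0 (n : ℕ) (hn : 1 ≤ n) (r : ℝ) (hr : 0 < r)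
    (f : (ℝ → Vec n) → Vec n) (L : ℝ → ℝ) (hf : GoodRHS r f L)
    (hFC : ∀ x0 : ℝ → Vec n, MemC0 r x0 → ∃ x : ℝ → Vec n, IsSol r f x0 x ⊤) :
    ((∀ ε : ℝ, 0 < ε → ∃ δ : ℝ, 0 < δ ∧ ∀ x0 x : ℝ → Vec n, MemC0 r x0 →
        IsSol r f x0 x ⊤ → supN r x0 ≤ δ → ∀ t : ℝ, 0 ≤ t → supN r (seg r x t) ≤ ε) ∧
     (∀ x0 x : ℝ → Vec n, MemC0 r x0 → IsSol r f x0 x ⊤ →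
        Tendsto (fun t => supN r (seg r x t)) atTop (nhds 0)) ∧
     (∀ ρ T : ℝ, 0 < ρ → 0 < T → ∃ M : ℝ, ∀ x0 x : ℝ → Vec n, MemC0 r x0 →
        IsSol r f x0 x ⊤ → supN r x0 ≤ ρ → ∀ t ∈ Icc (0:ℝ) T, supN r (seg r x t) ≤ M))
    ↔
    (∃ σ : ℝ → ℝ → ℝ, ClassKL σ ∧ ∀ x0 x : ℝ → Vec n, MemC0 r x0 →
        IsSol r f x0 x ⊤ → ∀ t : ℝ, 0 ≤ t → supN r (seg r x t) ≤ σ (supN r x0) t) :=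
  stmt0_general n r hr f L hf hFC
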